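/- Let r, s ∈ ℝ with |rs| < 1. (i) If (n₁, n₂, n₃) = Ñ(r,s), then n₃ < 0, r = (n₁+n₂)/(1−n₃) and s = (n₁−n₂)/(1−n₃). (ii) If (n₁, n₂, n₃) = −Ñ(r,s), then n₃ > 0, r = −(n₁+n₂)/(1+n₃) and s = −(n₁−n₂)/(1+n₃). Hence the parameter point (r,s) is recovered from the unit normal of a BI soliton surface at a regular point. -/

import Mathlib

/-- The candidate unit normal `Ñ(r,s) = ((r+s)/(1+rs), (r−s)/(1+rs), (rs−1)/(1+rs))`. -/
noncomputable def Ntilde (r s : ℝ) : ℝ × ℝ × ℝ :=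
  ((r + s) / (1 + r * s), (r - s) / (1 + r * s), (r * s - 1) / (1 + r * s))

/-- The parameter point `(r,s)` is recovered from the unit normal `±Ñ(r,s)`
of a BI soliton surface at a regular point. -/
theorem parameter_point_from_normal (r s : ℝ) (h : |r * s| < 1) :
    (∀ n₁ n₂ n₃ : ℝ, (n₁, n₂, n₃) = Ntilde r s →
      n₃ < 0 ∧ r = (n₁ + n₂) / (1 - n₃) ∧ s = (n₁ - n₂) / (1 - n₃)) ∧
    (∀ n₁ n₂ n₃ : ℝ, (n₁, n₂, n₃) = -Ntilde r s →
      0 < n₃ ∧ r = -(n₁ + n₂) / (1 + n₃) ∧ s = -(n₁ - n₂) / (1 + n₃)) := by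
  have h1 : (0:ℝ) < 1 + r * s := by
    have := abs_lt.mp h
    linarith [this.1]
  have h2 : r * s - 1 < 0 := by
    have := abs_lt.mp h
    linarith [this.2]
  have hne : (1 + r * s) ≠ 0 := ne_of_gt h1
  constructor
  · rintro n₁ n₂ n₃ heq
    simp only [Ntilde, Prod.mk.injEq] at heq
    obtain ⟨e1, e2, e3⟩ := heq
    subst e1 e2 e3
    refine ⟨div_neg_of_neg_of_pos h2 h1, ?_, ?_⟩
    · field_simp
      ring
    · rw [show (1:ℝ) - (r * s - 1) / (1 + r * s) = 2 / (1 + r * s) by field_simp; ring]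
      have hne' : 1 + s * r ≠ 0 := by rwa [mul_comm]
      field_simp
      ring
  · rintro n₁ n₂ n₃ heq
    simp only [Ntilde, Prod.neg_mk, Prod.mk.injEq] at heq
    obtain ⟨e1, e2, e3⟩ := heq
    subst e1 e2 e3
    refine ⟨neg_pos.mpr (div_neg_of_neg_of_pos h2 h1), ?_, ?_⟩
    · field_simp
      ring
    · rw [show (1:ℝ) + -((r * s - 1) / (1 + r * s)) = 2 / (1 + r * s) by field_simp; ring]
      have hne' : 1 + s * r ≠ 0 := by rwa [mul_comm]
      field_simp
      ring
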